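/- arXiv:2005.04217 — 2 statements merged into one kernel-verified Lean document; each statement's English description precedes it below -/
import Mathlib

section
/- For every natural number n and every integer x, the operator Z acts on the basis functions φ_n by (Z φ_n(·;α))(x) = φ_{n+1}(x;α) − φ_n(x;α). -/
/-- Pochhammer symbol `(a)_k = a (a+1) ⋯ (a+k-1)`, with `(a)_0 = 1`. -/
noncomputable def poch (a : ℝ) (k : ℕ) : ℝ := ∏ i ∈ Finset.range k, (a + (i : ℝ))

/-- Basis functions `φ_n(x;α) = (-x)_n / (α-x)_n`. -/
noncomputable def phi (α : ℝ) (n : ℕ) (x : ℤ) : ℝ :=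
  poch (-(x : ℝ)) n / poch (α - (x : ℝ)) n

/-- The difference operator `Z`: `(Z f)(x) = -f(x) + (x/(x-α)) f(x-1)`. -/
noncomputable def Zop (α : ℝ) (f : ℤ → ℝ) (x : ℤ) : ℝ :=
  -f x + ((x : ℝ) / ((x : ℝ) - α)) * f (x - 1)

/-! Since `(a)_{n+1} = a (a+1)_n`, we get `φ_{n+1}(x) = (-x)/(α-x) · φ_n(x-1)`, which is exactly
the second term of `(Z φ_n)(x)`. -/

lemma poch_succ (a : ℝ) (n : ℕ) : poch a (n + 1) = a * poch (a + 1) n := by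
  simp only [poch, Finset.prod_range_succ', Nat.cast_add, Nat.cast_one, Nat.cast_zero, add_zero]
  rw [mul_comm]
  congr 1
  exact Finset.prod_congr rfl fun i _ => by ring

lemma phi_succ (α : ℝ) (n : ℕ) (x : ℤ) :
    phi α (n + 1) x = (x / (x - α)) * phi α n (x - 1) := by
  have hnum : -((x - 1 : ℤ) : ℝ) = -x + 1 := by push_cast; ring
  have hden : α - ((x - 1 : ℤ) : ℝ) = α - x + 1 := by push_cast; ring
  rw [phi, phi, poch_succ, poch_succ, hnum, hden, mul_div_mul_comm, ← neg_div_neg_eq, neg_neg,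
    neg_sub]

theorem statement1_general (α : ℝ) (n : ℕ) (x : ℤ) :
    Zop α (phi α n) x = phi α (n + 1) x - phi α n x := by
  rw [Zop, phi_succ]
  ring

theorem statement1 (α : ℝ) (hα : ∀ m : ℤ, α ≠ (m : ℝ)) (n : ℕ) (x : ℤ) :
    Zop α (phi α n) x = phi α (n + 1) x - phi α n x :=
  statement1_general α n x
end

section
/- The hypergeometric distribution is invariant under the involution x → N − x, α → β + 2 − α: for every integer x with 0 ≤ x ≤ N, w_{N−x}^{(β+2−α, β)} = w_x^{(α,β)}. -/
/-- The hypergeometric distribution `w_x^{(α,β)}`. -/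
noncomputable def w (α β : ℝ) (N x : ℕ) : ℝ :=
  (poch (β - α - (N : ℝ) + 2) N / poch (β - (N : ℝ) + 1) N) *
    (poch (-(N : ℝ)) x * poch (1 - α) x) /
      ((Nat.factorial x : ℝ) * poch (β - α - (N : ℝ) + 2) x)

open Polynomial

theorem poch_eq_ascPochhammer_eval (a : ℝ) (k : ℕ) : poch a k = (ascPochhammer ℝ k).eval a := by
  induction k with
  | zero => simp [poch]
  | succ k ih => rw [poch, Finset.prod_range_succ, ← poch, ih, ascPochhammer_succ_eval]

theorem poch_add (a : ℝ) (m n : ℕ) : poch a (m + n) = poch a m * poch (a + m) n := by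
  simp [poch_eq_ascPochhammer_eval, ← ascPochhammer_mul, eval_comp]

theorem poch_eq_mul_poch_sub {k n : ℕ} (a : ℝ) (hk : k ≤ n) :
    poch a n = poch a k * poch (a + k) (n - k) := by
  rw [← poch_add, Nat.add_sub_cancel' hk]

theorem poch_sub_self (a : ℝ) (k : ℕ) : poch (a - k) k = (-1) ^ k * poch (1 - a) k := by
  rw [poch_eq_ascPochhammer_eval, poch_eq_ascPochhammer_eval, ← neg_sub,
    ascPochhammer_eval_neg_eq_descPochhammer, descPochhammer_eval_eq_ascPochhammer, sub_sub_cancel_left,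
    neg_add_eq_sub]

theorem poch_neg_natCast_div_factorial (n k : ℕ) :
    poch (-(n : ℝ)) k / k.factorial = (-1) ^ k * n.choose k := by
  rw [poch_eq_ascPochhammer_eval, ascPochhammer_eval_neg_eq_descPochhammer,
    Nat.cast_choose_eq_descPochhammer_div, mul_div_assoc]

theorem poch_ne_zero {a : ℝ} (ha : ∀ m : ℤ, a ≠ m) (k : ℕ) : poch a k ≠ 0 := by
  rw [poch_eq_ascPochhammer_eval, Ne, ascPochhammer_eval_eq_zero_iff]
  rintro ⟨j, -, hj⟩
  exact ha (-j) (by push_cast; linarith)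

theorem w_eq_choose_mul_poch {α β : ℝ} {N x : ℕ} (hx : x ≤ N)
    (hc : poch (β - α - N + 2) x ≠ 0) :
    w α β N x = (-1) ^ x * N.choose x * poch (1 - α) x * poch (β - α - N + 2 + x) (N - x) /
      poch (β - N + 1) N := by
  have hfac : (x.factorial : ℝ) ≠ 0 := by positivity
  rw [w, poch_eq_mul_poch_sub _ hx, ← poch_neg_natCast_div_factorial]
  field_simp

theorem statement9_general (N : ℕ) (α β : ℝ)
    (hα : ∀ m : ℤ, α ≠ (m : ℝ))
    (hβα : ∀ m : ℤ, β - α ≠ (m : ℝ))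
    (x : ℕ) (hx : x ≤ N) :
    w (β + 2 - α) β N (N - x) = w α β N x := by
  have hc : poch (β - α - N + 2) x ≠ 0 :=
    poch_ne_zero (fun m h => hβα (m + N - 2) (by push_cast; linarith)) x
  have hc' : poch (β - (β + 2 - α) - N + 2) (N - x) ≠ 0 :=
    poch_ne_zero (fun m h => hα (m + N) (by push_cast; linarith)) (N - x)
  have hcast : ((N - x : ℕ) : ℝ) = N - x := Nat.cast_sub hx
  have h₁ : poch (β - (β + 2 - α) - N + 2 + ((N - x : ℕ) : ℝ)) x = (-1) ^ x * poch (1 - α) x := by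
    rw [hcast, ← poch_sub_self]; ring_nf
  have h₂ : poch (1 - (β + 2 - α)) (N - x) =
      (-1) ^ (N - x) * poch (β - α - N + 2 + x) (N - x) := by
    rw [show β - α - N + 2 + x = 1 - (α - β - 1 + ((N - x : ℕ) : ℝ)) by rw [hcast]; ring,
      ← poch_sub_self]
    ring_nf
  have hsign : ((-1 : ℝ) ^ (N - x)) * (-1) ^ (N - x) = 1 := by rw [← mul_pow]; norm_num
  rw [w_eq_choose_mul_poch (Nat.sub_le N x) hc', w_eq_choose_mul_poch hx hc, Nat.choose_symm hx,
    Nat.sub_sub_self hx, h₁, h₂]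
  linear_combination (-1 : ℝ) ^ x * N.choose x * poch (1 - α) x * poch (β - α - N + 2 + x) (N - x) /
    poch (β - N + 1) N * hsign

theorem statement9 (N : ℕ) (hN : 0 < N) (α β : ℝ)
    (hα : ∀ m : ℤ, α ≠ (m : ℝ)) (hβ : ∀ m : ℤ, β ≠ (m : ℝ))
    (hβα : ∀ m : ℤ, β - α ≠ (m : ℝ))
    (x : ℕ) (hx : x ≤ N) :
    w (β + 2 - α) β N (N - x) = w α β N x :=
  statement9_general N α β hα hβα x hx
end
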